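/- arXiv:1305.5955 — 3 statements merged into one kernel-verified Lean document; each statement's English description precedes it below -/
import Mathlib

section
/- Let P and P' be the configuration matrices of tensegrity frameworks (G,p) in ℝ^r and (G,p') in ℝ^{r'}, both with centroid at the origin (P^T e = 0 and P'^T e = 0). Then (G,p') is dominated by (G,p) if and only if P'P'^T − PP^T = ℰ(y) + x e^T + e x^T for some y = (y_ij) ∈ ℝ^{|Ē|+|C|+|S|} with y_ij ≥ 0 for all {i,j} ∈ C and y_ij ≤ 0 for all {i,j} ∈ S, where x = −(1/n) ℰ(y) e + (1/(2n²)) (e^T ℰ(y) e) e. -/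
open Matrix BigOperators

noncomputable section

/-- Squared Euclidean distance between two points of `ℝ^r`. -/
def sqDist {r : ℕ} (x y : Fin r → ℝ) : ℝ := ∑ k, (x k - y k) ^ 2

/-- `(G,q)` is dominated by `(G,p)`, where the edges of `G` are partitioned into
bars `B`, cables `C` and struts `S`. -/
def Dominates {n r s : ℕ} (B C S : Set (Fin n × Fin n))
    (p : Fin n → Fin r → ℝ) (q : Fin n → Fin s → ℝ) : Prop :=
  (∀ e ∈ B, sqDist (q e.1) (q e.2) = sqDist (p e.1) (p e.2)) ∧
  (∀ e ∈ C, sqDist (q e.1) (q e.2) ≤ sqDist (p e.1) (p e.2)) ∧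
  (∀ e ∈ S, sqDist (p e.1) (p e.2) ≤ sqDist (q e.1) (q e.2))

/-- `(G,q)` is congruent to `(G,p)`. -/
def TensegrityCongruent {n r s : ℕ} (p : Fin n → Fin r → ℝ) (q : Fin n → Fin s → ℝ) : Prop :=
  ∀ i j, sqDist (q i) (q j) = sqDist (p i) (p j)

/-- `(G,p)` is universally rigid: every framework `(G,q)` in any dimension `s`
dominated by `(G,p)` is congruent to `(G,p)`. -/
def UniversallyRigid {n r : ℕ} (B C S : Set (Fin n × Fin n))
    (p : Fin n → Fin r → ℝ) : Prop :=
  ∀ (s : ℕ) (q : Fin n → Fin s → ℝ), Dominates B C S p q → TensegrityCongruent p q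

/-- `(G,q)` is affinely-dominated by `(G,p)`: dominated and `q^i = A p^i + b`. -/
def AffinelyDominated {n r : ℕ} (B C S : Set (Fin n × Fin n))
    (p q : Fin n → Fin r → ℝ) : Prop :=
  Dominates B C S p q ∧
  ∃ (A : Matrix (Fin r) (Fin r) ℝ) (b : Fin r → ℝ), ∀ i, q i = A.mulVec (p i) + b

/-- `ω` is an equilibrium stress of the framework with edge set `E` and configuration `p`. -/
def IsStress {n r : ℕ} (E : Set (Fin n × Fin n)) (p : Fin n → Fin r → ℝ)
    (ω : Fin n → Fin n → ℝ) : Prop :=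
  (∀ i j, ω i j = ω j i) ∧ (∀ i j, (i, j) ∉ E → ω i j = 0) ∧
  (∀ i : Fin n, ∑ j, ω i j • (p i - p j) = 0)

/-- A stress is proper if `ω_ij ≥ 0` on cables and `ω_ij ≤ 0` on struts. -/
def IsProperStress {n : ℕ} (C S : Set (Fin n × Fin n)) (ω : Fin n → Fin n → ℝ) : Prop :=
  (∀ e ∈ C, 0 ≤ ω e.1 e.2) ∧ (∀ e ∈ S, ω e.1 e.2 ≤ 0)

/-- The stress matrix `Ω` associated to the stress `ω`. -/
def stressMatrix {n : ℕ} (ω : Fin n → Fin n → ℝ) : Matrix (Fin n) (Fin n) ℝ :=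
  Matrix.of fun i j => if i = j then ∑ k, ω i k else -ω i j

/-- `B`, `C`, `S` are the (symmetrically encoded) bars, cables and struts of a
simple connected tensegrity graph on `{1,…,n}`. -/
def TensegrityGraph {n : ℕ} (B C S : Set (Fin n × Fin n)) : Prop :=
  (∀ i j, (i, j) ∈ B → (j, i) ∈ B) ∧ (∀ i j, (i, j) ∈ C → (j, i) ∈ C) ∧
  (∀ i j, (i, j) ∈ S → (j, i) ∈ S) ∧ (∀ i : Fin n, (i, i) ∉ B ∪ C ∪ S) ∧
  B ∩ C = ∅ ∧ B ∩ S = ∅ ∧ C ∩ S = ∅ ∧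
  (SimpleGraph.fromRel fun i j => (i, j) ∈ B ∪ C ∪ S).Connected

/-- A set of points of `ℝ^r` is in general position if every `r+1` of them are
affinely independent. -/
def SetInGeneralPosition {r : ℕ} (A : Set (Fin r → ℝ)) : Prop :=
  ∀ T : Finset (Fin r → ℝ), ↑T ⊆ A → T.card = r + 1 →
    AffineIndependent ℝ (fun x : {x // x ∈ T} => (x : Fin r → ℝ))

/-- `Z` is a Gale matrix of the configuration with matrix `P`: its columns form a
basis of the null space of the matrix obtained by stacking `Pᵀ` on top of `eᵀ`. -/
def IsGaleMatrix {n r m : ℕ} (P : Matrix (Fin n) (Fin r) ℝ)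
    (Z : Matrix (Fin n) (Fin m) ℝ) : Prop :=
  (∀ k, Pᵀ *ᵥ (fun i => Z i k) = 0) ∧ (∀ k, ∑ i, Z i k = 0) ∧
  LinearIndependent ℝ (fun k i => Z i k) ∧
  ∀ v : Fin n → ℝ, Pᵀ *ᵥ v = 0 → ∑ i, v i = 0 →
    v ∈ Submodule.span ℝ (Set.range fun k i => Z i k)

/-- `Ω` is a stress matrix of the framework with edge set `E` and configuration
matrix `P` (with centroid at the origin): it is symmetric, vanishes on missing
edges, and satisfies `Pᵀ Ω = 0` and `Ω e = 0`. -/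
def IsStressMatrix {n r : ℕ} (E : Set (Fin n × Fin n)) (P : Matrix (Fin n) (Fin r) ℝ)
    (Ω : Matrix (Fin n) (Fin n) ℝ) : Prop :=
  Ω.IsSymm ∧ (∀ i j, i ≠ j → (i, j) ∉ E → Ω i j = 0) ∧
  Pᵀ * Ω = 0 ∧ Ω *ᵥ (fun _ => (1 : ℝ)) = 0

/-- The matrix `F^{ij} = (e^i - e^j)(e^i - e^j)ᵀ`. -/
def Fmat {n : ℕ} (i j : Fin n) : Matrix (Fin n) (Fin n) ℝ :=
  Matrix.vecMulVec (Pi.single i 1 - Pi.single j 1) (Pi.single i 1 - Pi.single j 1)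

/-- The matrix `E^{ij} = e^i (e^j)ᵀ + e^j (e^i)ᵀ`. -/
def Emat {n : ℕ} (i j : Fin n) : Matrix (Fin n) (Fin n) ℝ :=
  Matrix.vecMulVec (Pi.single i 1) (Pi.single j 1) +
    Matrix.vecMulVec (Pi.single j 1) (Pi.single i 1)

/-- The matrix `L^i = e^i eᵀ + e (e^i)ᵀ`. -/
def Lmat {n : ℕ} (i : Fin n) : Matrix (Fin n) (Fin n) ℝ :=
  Matrix.vecMulVec (Pi.single i 1) (fun _ => 1) +
    Matrix.vecMulVec (fun _ => 1) (Pi.single i 1)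

/-- `ℰ(y) = Σ y_ij E^{ij}` (for `y` supported on the relevant pairs `i < j`). -/
def EscrY {n : ℕ} (y : Fin n → Fin n → ℝ) : Matrix (Fin n) (Fin n) ℝ :=
  ∑ i, ∑ j, y i j • Emat i j

/-- The vector `x = -(1/n) ℰ(y) e + (1/(2n²)) (eᵀ ℰ(y) e) e`. -/
def xvec {n : ℕ} (y : Fin n → Fin n → ℝ) : Fin n → ℝ :=
  (-(1 / (n : ℝ))) • (EscrY y *ᵥ fun _ => (1 : ℝ)) +
    ((1 / (2 * (n : ℝ) ^ 2)) * ((fun _ => (1 : ℝ)) ⬝ᵥ (EscrY y *ᵥ fun _ => (1 : ℝ)))) •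
      (fun _ : Fin n => (1 : ℝ))

/-!
Put `D = P'P'ᵀ - PPᵀ`. Squared distances are read off a Gram matrix `M` as
`M i i + M j j - 2 M i j`, and this functional kills `x eᵀ + e xᵀ`, so
`‖p'^i - p'^j‖² - ‖p^i - p^j‖² = -2 (y_ij + y_ji)` whenever `D = ℰ(y) + x eᵀ + e xᵀ`.
Conversely, `D` is symmetric with zero row sums because both configurations are centred, and
such a matrix is recovered from its squared distances by `y_ij = -(D_ii + D_jj - 2 D_ij)/2`.
In both directions the domination inequalities become the sign conditions on `y` edge by edge.
-/

section GramMatrices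

variable {n : ℕ}

def gramSqDist (M : Matrix (Fin n) (Fin n) ℝ) (i j : Fin n) : ℝ :=
  M i i + M j j - 2 * M i j

lemma gramSqDist_sub (M N : Matrix (Fin n) (Fin n) ℝ) (i j : Fin n) :
    gramSqDist (M - N) i j = gramSqDist M i j - gramSqDist N i j := by
  simp only [gramSqDist, Matrix.sub_apply]
  ring

lemma sqDist_eq_gramSqDist {r : ℕ} (p : Fin n → Fin r → ℝ) (i j : Fin n) :
    sqDist (p i) (p j) = gramSqDist (of p * (of p)ᵀ) i j := by
  simp only [sqDist, gramSqDist, Matrix.mul_apply, Matrix.transpose_apply, Matrix.of_apply,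
    Finset.mul_sum, ← Finset.sum_add_distrib, ← Finset.sum_sub_distrib]
  exact Finset.sum_congr rfl fun k _ => by ring

lemma isSymm_of_mul_transpose {r : ℕ} (p : Fin n → Fin r → ℝ) : (of p * (of p)ᵀ).IsSymm := by
  simp [IsSymm, transpose_mul]

lemma of_mul_transpose_mulVec_one {r : ℕ} (p : Fin n → Fin r → ℝ)
    (hcentroid : ∀ k, ∑ i, p i k = 0) : (of p * (of p)ᵀ) *ᵥ (fun _ => 1) = 0 := by
  rw [← mulVec_mulVec]
  have : (of p)ᵀ *ᵥ (fun _ => (1 : ℝ)) = 0 := funext fun k => by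
    simpa [mulVec, dotProduct] using hcentroid k
  simp [this]

lemma EscrY_apply (y : Fin n → Fin n → ℝ) (a b : Fin n) :
    EscrY y a b = y a b + y b a := by
  simp only [EscrY, Emat, Matrix.sum_apply, Matrix.smul_apply, Matrix.add_apply,
    Matrix.vecMulVec_apply, Pi.single_apply, smul_eq_mul, mul_add, Finset.sum_add_distrib]
  rw [Finset.sum_comm (f := fun i j => y i j * _)]
  simp [mul_ite, Finset.sum_ite_eq]

lemma gramSqDist_EscrY_add (y : Fin n → Fin n → ℝ) (hy : ∀ i, y i i = 0) (x : Fin n → ℝ)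
    (i j : Fin n) :
    gramSqDist (EscrY y + vecMulVec x (fun _ => 1) + vecMulVec (fun _ => 1) x) i j =
      -2 * (y i j + y j i) := by
  simp only [gramSqDist, Matrix.add_apply, Matrix.vecMulVec_apply, EscrY_apply, hy]
  ring

/-- Inverts `y ↦ ℰ(y) + x eᵀ + e xᵀ` on symmetric matrices with zero row sums. -/
def edgeCoeffs (M : Matrix (Fin n) (Fin n) ℝ) (i j : Fin n) : ℝ :=
  if i < j then -gramSqDist M i j / 2 else 0

lemma EscrY_edgeCoeffs {M : Matrix (Fin n) (Fin n) ℝ} (hM : M.IsSymm) (a b : Fin n) :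
    EscrY (edgeCoeffs M) a b = M a b - (M a a + M b b) / 2 := by
  rw [EscrY_apply]
  rcases lt_trichotomy a b with h | rfl | h
  · simp [edgeCoeffs, gramSqDist, h, h.not_gt]
    ring
  · simp [edgeCoeffs]
  · simp [edgeCoeffs, gramSqDist, h, h.not_gt, hM.apply a b]
    ring

lemma xvec_edgeCoeffs {M : Matrix (Fin n) (Fin n) ℝ} (hM : M.IsSymm)
    (hM1 : M *ᵥ (fun _ => 1) = 0) : xvec (edgeCoeffs M) = fun a => M a a / 2 := by
  have hrow (a : Fin n) : ∑ b, M a b = 0 := by simpa [mulVec, dotProduct] using congrFun hM1 a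
  have hrowE (a : Fin n) :
      (EscrY (edgeCoeffs M) *ᵥ fun _ => 1) a = -((n * M a a + trace M) / 2) := by
    simp only [mulVec, dotProduct, mul_one, EscrY_edgeCoeffs hM, Finset.sum_sub_distrib,
      ← Finset.sum_div, Finset.sum_add_distrib, hrow, trace, Matrix.diag_apply]
    simp
  have hsumE : (fun _ => (1 : ℝ)) ⬝ᵥ (EscrY (edgeCoeffs M) *ᵥ fun _ => 1) = -(n * trace M) := by
    simp only [dotProduct, one_mul, hrowE, Finset.sum_neg_distrib, ← Finset.sum_div,
      Finset.sum_add_distrib, ← Finset.mul_sum]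
    simp [trace]
  funext a
  have hn : (n : ℝ) ≠ 0 := Nat.cast_ne_zero.mpr a.pos.ne'
  simp only [xvec, Pi.add_apply, Pi.smul_apply, smul_eq_mul, hrowE, hsumE]
  field_simp
  ring

lemma eq_EscrY_edgeCoeffs_add {M : Matrix (Fin n) (Fin n) ℝ} (hM : M.IsSymm)
    (hM1 : M *ᵥ (fun _ => 1) = 0) :
    M = EscrY (edgeCoeffs M) + vecMulVec (xvec (edgeCoeffs M)) (fun _ => 1) +
      vecMulVec (fun _ => 1) (xvec (edgeCoeffs M)) := by
  ext a b
  simp only [Matrix.add_apply, Matrix.vecMulVec_apply, EscrY_edgeCoeffs hM,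
    xvec_edgeCoeffs hM hM1]
  ring

lemma edgeCoeffs_ne_zero {M : Matrix (Fin n) (Fin n) ℝ} {i j : Fin n}
    (h : edgeCoeffs M i j ≠ 0) : i < j ∧ gramSqDist M i j ≠ 0 := by
  unfold edgeCoeffs at h
  split_ifs at h with hij
  · exact ⟨hij, by simpa using h⟩
  · exact absurd rfl h

end GramMatrices

/-- Gram-matrix characterization of domination: `(G,p')` is dominated
by `(G,p)` iff `P'P'ᵀ - PPᵀ = ℰ(y) + x eᵀ + e xᵀ` for some `y` supported on
`Ē ∪ C ∪ S` with `y ≥ 0` on cables and `y ≤ 0` on struts, where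
`x = -(1/n) ℰ(y) e + (1/(2n²))(eᵀ ℰ(y) e) e`. -/
theorem statement10 {n r r' : ℕ}
    (B C S : Set (Fin n × Fin n)) (hG : TensegrityGraph B C S)
    (p : Fin n → Fin r → ℝ) (p' : Fin n → Fin r' → ℝ)
    (hcentroid : ∀ k, ∑ i, p i k = 0)
    (hcentroid' : ∀ k, ∑ i, p' i k = 0) :
    Dominates B C S p p' ↔
      ∃ y : Fin n → Fin n → ℝ,
        (∀ i j, y i j ≠ 0 →
          i < j ∧ ((i, j) ∉ B ∪ C ∪ S ∨ (i, j) ∈ C ∨ (i, j) ∈ S)) ∧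
        (∀ i j, (i, j) ∈ C → 0 ≤ y i j) ∧
        (∀ i j, (i, j) ∈ S → y i j ≤ 0) ∧
        Matrix.of p' * (Matrix.of p')ᵀ - Matrix.of p * (Matrix.of p)ᵀ =
          EscrY y + Matrix.vecMulVec (xvec y) (fun _ => 1) +
            Matrix.vecMulVec (fun _ => 1) (xvec y) := by
  obtain ⟨hBsym, hCsym, hSsym, -, hBC, hBS, -, -⟩ := hG
  set D := of p' * (of p')ᵀ - of p * (of p)ᵀ
  have hdist (i j : Fin n) :
      gramSqDist D i j = sqDist (p' i) (p' j) - sqDist (p i) (p j) := by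
    rw [gramSqDist_sub, sqDist_eq_gramSqDist, sqDist_eq_gramSqDist]
  constructor
  · rintro ⟨hB, hC, hS⟩
    have hDsymm : D.IsSymm := (isSymm_of_mul_transpose p').sub (isSymm_of_mul_transpose p)
    have hD1 : D *ᵥ (fun _ => 1) = 0 := by
      simp [D, sub_mulVec, of_mul_transpose_mulVec_one p hcentroid,
        of_mul_transpose_mulVec_one p' hcentroid']
    refine ⟨edgeCoeffs D, fun i j hij => ?_, fun i j hC' => ?_, fun i j hS' => ?_,
      eq_EscrY_edgeCoeffs_add hDsymm hD1⟩
    · obtain ⟨hlt, hne⟩ := edgeCoeffs_ne_zero hij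
      refine ⟨hlt, ?_⟩
      by_cases hmem : (i, j) ∈ B ∪ C ∪ S
      · rcases hmem with (hb | hc) | hs
        · exact absurd (by rw [hdist, hB _ hb, sub_self]) hne
        · exact .inr (.inl hc)
        · exact .inr (.inr hs)
      · exact .inl hmem
    · have := hC _ hC'
      unfold edgeCoeffs
      split_ifs <;> linarith [hdist i j]
    · have := hS _ hS'
      unfold edgeCoeffs
      split_ifs <;> linarith [hdist i j]
  · rintro ⟨y, hsupp, hyC, hyS, heq⟩
    have hdiag (i : Fin n) : y i i = 0 := by
      by_contra h
      exact (hsupp i i h).1.false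
    have hdist_y (i j : Fin n) :
        sqDist (p' i) (p' j) = sqDist (p i) (p j) - 2 * (y i j + y j i) := by
      linarith [hdist i j, heq ▸ gramSqDist_EscrY_add y hdiag (xvec y) i j]
    have hyB (i j : Fin n) (hb : (i, j) ∈ B) : y i j = 0 := by
      by_contra h
      rcases (hsupp i j h).2 with hmem | hc | hs
      · exact hmem (.inl (.inl hb))
      · exact (hBC.subset ⟨hb, hc⟩).elim
      · exact (hBS.subset ⟨hb, hs⟩).elim
    refine ⟨fun ⟨i, j⟩ hb => ?_, fun ⟨i, j⟩ hc => ?_, fun ⟨i, j⟩ hs => ?_⟩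
    · rw [hdist_y, hyB i j hb, hyB j i (hBsym i j hb)]
      ring
    · linarith [hdist_y i j, hyC i j hc, hyC j i (hCsym i j hc)]
    · linarith [hdist_y i j, hyS i j hs, hyS j i (hSsym i j hs)]
end
end

section
/- Let (G,p) be an r-dimensional tensegrity framework on n vertices in ℝ^r and let Ω be a proper positive semidefinite stress matrix of (G,p) of rank n−r−1. Then (G,p) is dimensionally rigid, i.e., no s-dimensional tensegrity framework (G,q) with s ≥ r+1 is dominated by (G,p). -/
/-!
A proper stress turns domination into an energy inequality: the stress energy
`Σ ω_ij ‖q^i - q^j‖²` of `q` is at most that of `p`, which vanishes because the energy of a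
configuration is twice the sum of the quadratic forms of `Ω` on its coordinate columns and
`Ω` annihilates the columns of `p`. As `Ω` is positive semidefinite, all coordinate columns of
`q`, together with the all-ones vector, lie in `ker Ω`. For an `s`-dimensional `q` these are
`s + 1` linearly independent vectors, whereas `ker Ω` has dimension `n - rank Ω ≤ r + 1`.
-/

open Matrix BigOperators

noncomputable section

theorem linearIndependent_cons_one_of_affineSpan_eq_top {𝕜 ι : Type*} [Field 𝕜] [Fintype ι]
    {m : ℕ} {f : ι → Fin m → 𝕜} (hf : affineSpan 𝕜 (Set.range f) = ⊤) :
    LinearIndependent 𝕜 (Fin.cons (fun _ => 1) (fun k i => f i k) : Fin (m + 1) → ι → 𝕜) := by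
  classical
  rw [Fintype.linearIndependent_iff]
  intro g hg
  set φ : (Fin m → 𝕜) →ᵃ[𝕜] 𝕜 :=
    (dotProductEquiv 𝕜 (Fin m) (fun k => g k.succ)).toAffineMap + AffineMap.const 𝕜 _ (g 0)
  have hφ : ∀ x, φ x = (fun k => g k.succ) ⬝ᵥ x + g 0 := fun x => rfl
  have hφ0 : φ = AffineMap.const 𝕜 _ 0 := by
    refine AffineMap.ext_on hf ?_
    rintro - ⟨i, rfl⟩
    have := congrFun hg i
    simp only [Fin.sum_univ_succ, Finset.sum_apply, Pi.smul_apply, Fin.cons_zero, Fin.cons_succ,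
      smul_eq_mul, mul_one, Pi.zero_apply] at this
    simp only [hφ, AffineMap.const_apply, dotProduct]
    linear_combination this
  have hg0 : g 0 = 0 := by simpa [hφ] using congrArg (· 0) hφ0
  refine Fin.cases hg0 fun k => ?_
  simpa [hφ, hg0] using congrArg (· (Pi.single k 1)) hφ0

theorem card_add_rank_le_of_mulVec_eq_zero {K m n ι : Type*} [Field K] [Fintype m] [Fintype n]
    [Fintype ι] {A : Matrix m n K} {v : ι → n → K} (hv : LinearIndependent K v)
    (hA : ∀ i, A *ᵥ v i = 0) : Fintype.card ι + A.rank ≤ Fintype.card n := by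
  have hspan : Submodule.span K (Set.range v) ≤ LinearMap.ker A.mulVecLin :=
    Submodule.span_le.2 <| Set.range_subset_iff.2 hA
  have := LinearMap.finrank_range_add_finrank_ker A.mulVecLin
  rw [Module.finrank_fintype_fun_eq_card] at this
  rw [Matrix.rank, ← finrank_span_eq_card hv]
  have := Submodule.finrank_mono hspan
  omega

theorem Matrix.PosSemidef.mulVec_eq_zero_of_sum_dotProduct_mulVec_nonpos {n ι : Type*} [Fintype n]
    [Fintype ι] {A : Matrix n n ℝ} (hA : A.PosSemidef) {v : ι → n → ℝ}
    (h : ∑ k, v k ⬝ᵥ A *ᵥ v k ≤ 0) (k : ι) : A *ᵥ v k = 0 := by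
  have hnonneg : ∀ k, 0 ≤ v k ⬝ᵥ A *ᵥ v k := fun k => by
    simpa using hA.dotProduct_mulVec_nonneg (v k)
  have hzero := (Finset.sum_eq_zero_iff_of_nonneg fun k _ => hnonneg k).1
    (le_antisymm h (Finset.sum_nonneg fun k _ => hnonneg k)) k (Finset.mem_univ k)
  exact (hA.dotProduct_mulVec_zero_iff (v k)).1 (by simpa using hzero)

def stressEnergy {n d : ℕ} (ω : Fin n → Fin n → ℝ) (c : Fin n → Fin d → ℝ) : ℝ :=
  ∑ i, ∑ j, ω i j * sqDist (c i) (c j)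

section StressMatrix

variable {n : ℕ} {ω : Fin n → Fin n → ℝ}

theorem stressMatrix_mulVec_apply (hdiag : ∀ i, ω i i = 0) (u : Fin n → ℝ) (i : Fin n) :
    (stressMatrix ω *ᵥ u) i = ∑ j, ω i j * (u i - u j) := by
  have hentry : ∀ j, stressMatrix ω i j = (if i = j then ∑ k, ω i k else 0) - ω i j := by
    intro j
    by_cases hij : i = j
    · subst hij; simp [stressMatrix, hdiag]
    · simp [stressMatrix, hij]
  simp only [mulVec, dotProduct, hentry, sub_mul, ite_mul, zero_mul, Finset.sum_sub_distrib,
    Finset.sum_ite_eq, Finset.mem_univ, if_true, mul_sub, Finset.sum_mul]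

theorem stressMatrix_mulVec_one (hdiag : ∀ i, ω i i = 0) :
    stressMatrix ω *ᵥ (fun _ => 1) = 0 := by
  funext i
  simp [stressMatrix_mulVec_apply hdiag]

theorem stressMatrix_mulVec_coord_eq_zero {r : ℕ} {p : Fin n → Fin r → ℝ}
    (hdiag : ∀ i, ω i i = 0) (heq : ∀ i, ∑ j, ω i j • (p i - p j) = 0) (k : Fin r) :
    stressMatrix ω *ᵥ (fun i => p i k) = 0 := by
  funext i
  simpa [stressMatrix_mulVec_apply hdiag] using congrFun (heq i) k

theorem two_mul_dotProduct_stressMatrix_mulVec (hsym : ∀ i j, ω i j = ω j i)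
    (hdiag : ∀ i, ω i i = 0) (u : Fin n → ℝ) :
    2 * (u ⬝ᵥ stressMatrix ω *ᵥ u) = ∑ i, ∑ j, ω i j * (u i - u j) ^ 2 := by
  -- `(a - b)² = a (a - b) + b (b - a)`, and the symmetry of `ω` makes both halves equal.
  have hhalf : ∑ i, ∑ j, ω i j * (u j * (u j - u i)) = u ⬝ᵥ stressMatrix ω *ᵥ u := by
    rw [Finset.sum_comm]
    simp only [dotProduct, stressMatrix_mulVec_apply hdiag, Finset.mul_sum, hsym]
    exact Finset.sum_congr rfl fun i _ => Finset.sum_congr rfl fun j _ => by ring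
  calc 2 * (u ⬝ᵥ stressMatrix ω *ᵥ u)
      = (u ⬝ᵥ stressMatrix ω *ᵥ u) + ∑ i, ∑ j, ω i j * (u j * (u j - u i)) := by rw [hhalf]; ring
    _ = ∑ i, ∑ j, ω i j * (u i - u j) ^ 2 := by
      simp only [dotProduct, stressMatrix_mulVec_apply hdiag, Finset.mul_sum,
        ← Finset.sum_add_distrib]
      exact Finset.sum_congr rfl fun i _ => Finset.sum_congr rfl fun j _ => by ring

theorem stressEnergy_eq_two_mul_sum (hsym : ∀ i j, ω i j = ω j i) (hdiag : ∀ i, ω i i = 0)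
    {d : ℕ} (c : Fin n → Fin d → ℝ) :
    stressEnergy ω c = 2 * ∑ k, (fun i => c i k) ⬝ᵥ stressMatrix ω *ᵥ (fun i => c i k) := by
  simp only [Finset.mul_sum, two_mul_dotProduct_stressMatrix_mulVec hsym hdiag, stressEnergy,
    sqDist]
  exact (Finset.sum_congr rfl fun i _ => Finset.sum_comm).trans Finset.sum_comm

theorem stressEnergy_eq_zero {r : ℕ} {p : Fin n → Fin r → ℝ} (hsym : ∀ i j, ω i j = ω j i)
    (hdiag : ∀ i, ω i i = 0) (heq : ∀ i, ∑ j, ω i j • (p i - p j) = 0) :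
    stressEnergy ω p = 0 := by
  simp [stressEnergy_eq_two_mul_sum hsym hdiag, stressMatrix_mulVec_coord_eq_zero hdiag heq]

theorem stressEnergy_le_of_dominates {B C S : Set (Fin n × Fin n)} {r s : ℕ}
    {p : Fin n → Fin r → ℝ} {q : Fin n → Fin s → ℝ}
    (hsupp : ∀ i j, (i, j) ∉ B ∪ C ∪ S → ω i j = 0) (hproper : IsProperStress C S ω)
    (hdom : Dominates B C S p q) : stressEnergy ω q ≤ stressEnergy ω p := by
  obtain ⟨hB, hC, hS⟩ := hdom
  refine Finset.sum_le_sum fun i _ => Finset.sum_le_sum fun j _ => ?_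
  by_cases hb : (i, j) ∈ B
  · rw [hB (i, j) hb]
  by_cases hc : (i, j) ∈ C
  · exact mul_le_mul_of_nonneg_left (hC (i, j) hc) (hproper.1 (i, j) hc)
  by_cases hs : (i, j) ∈ S
  · exact mul_le_mul_of_nonpos_left (hS (i, j) hs) (hproper.2 (i, j) hs)
  simp [hsupp i j (by simp [hb, hc, hs])]

end StressMatrix

theorem statement12_general {n r : ℕ}
    (B C S : Set (Fin n × Fin n)) (hG : TensegrityGraph B C S)
    (p : Fin n → Fin r → ℝ)
    (ω : Fin n → Fin n → ℝ)
    (hstress : IsStress (B ∪ C ∪ S) p ω)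
    (hproper : IsProperStress C S ω)
    (hpsd : (stressMatrix ω).PosSemidef)
    (hrank : (stressMatrix ω).rank = n - r - 1) :
    ∀ s : ℕ, r + 1 ≤ s → ∀ q : Fin n → Fin s → ℝ,
      affineSpan ℝ (Set.range q) = ⊤ → ¬ Dominates B C S p q := by
  intro s hs q hq hdom
  obtain ⟨hsym, hsupp, heq⟩ := hstress
  obtain ⟨-, -, -, hloop, -⟩ := hG
  have hdiag : ∀ i, ω i i = 0 := fun i => hsupp i i (hloop i)
  have henergy : ∑ k, (fun i => q i k) ⬝ᵥ stressMatrix ω *ᵥ (fun i => q i k) ≤ 0 := by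
    have := stressEnergy_le_of_dominates hsupp hproper hdom
    rw [stressEnergy_eq_two_mul_sum hsym hdiag, stressEnergy_eq_zero hsym hdiag heq] at this
    linarith
  have hker : ∀ j, stressMatrix ω *ᵥ
      (Fin.cons (fun _ => 1) (fun k i => q i k) : Fin (s + 1) → Fin n → ℝ) j = 0 :=
    Fin.cases (stressMatrix_mulVec_one hdiag)
      (hpsd.mulVec_eq_zero_of_sum_dotProduct_mulVec_nonpos henergy)
  have hcard := card_add_rank_le_of_mulVec_eq_zero
    (linearIndependent_cons_one_of_affineSpan_eq_top hq) hker
  simp only [Fintype.card_fin, hrank] at hcard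
  -- `n - r - 1` truncates to `0` when `n ≤ r`, but then `s + 1 > r + 1 > n` as well.
  omega

/-- a tensegrity framework with a proper PSD stress matrix of rank
`n-r-1` is dimensionally rigid: no `s`-dimensional framework with `s ≥ r + 1` is
dominated by it. -/
theorem statement12 {n r : ℕ}
    (B C S : Set (Fin n × Fin n)) (hG : TensegrityGraph B C S)
    (p : Fin n → Fin r → ℝ)
    (hdim : affineSpan ℝ (Set.range p) = ⊤)
    (ω : Fin n → Fin n → ℝ)
    (hstress : IsStress (B ∪ C ∪ S) p ω)
    (hproper : IsProperStress C S ω)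
    (hpsd : (stressMatrix ω).PosSemidef)
    (hrank : (stressMatrix ω).rank = n - r - 1) :
    ∀ s : ℕ, r + 1 ≤ s → ∀ q : Fin n → Fin s → ℝ,
      affineSpan ℝ (Set.range q) = ⊤ → ¬ Dominates B C S p q :=
  statement12_general B C S hG p ω hstress hproper hpsd hrank
end
end

section
/- Let (G,p) be an r-dimensional tensegrity framework in ℝ^r with configuration matrix P satisfying P^T e = 0, and let Ω be a proper stress matrix of (G,p) associated with a proper stress ω. Then there exists a tensegrity framework (G,p') affinely-dominated by, but not congruent to, (G,p) if and only if there exists a non-zero symmetric r×r matrix Φ such that trace(F^{ij} P Φ P^T) = 0 for all {i,j} ∈ B ∪ C* ∪ S*, trace(F^{ij} P Φ P^T) ≤ 0 for all {i,j} ∈ C⁰, and trace(F^{ij} P Φ P^T) ≥ 0 for all {i,j} ∈ S⁰, where C* = {{i,j}∈C : ω_ij ≠ 0}, S* = {{i,j}∈S : ω_ij ≠ 0}, C⁰ = C ∖ C* and S⁰ = S ∖ S*. -/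
open Matrix BigOperators

noncomputable section

/-!
An affine image `q^i = A p^i + b` changes the squared length of every pair `{i,j}` by
`(p^i - p^j)ᵀ Φ (p^i - p^j)` with `Φ = AᵀA - I`, and conversely every symmetric `Φ` is of
this form up to a positive factor (take `A = (I + εΦ)^{1/2}`). So the affinely-dominated
frameworks correspond to the symmetric `Φ` whose quadratic form is zero on bars, `≤ 0` on
cables and `≥ 0` on struts; congruence means the form vanishes on all differences, which
forces `Φ = 0` because these differences span `ℝ^r`. Finally, equilibrium gives
`Σ ω_ij (p^i - p^j)ᵀ Φ (p^i - p^j) = trace(Ω P Φ Pᵀ) = 0`, and for a proper stress every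
summand is `≤ 0`, so the form vanishes on every edge with `ω_ij ≠ 0`.
-/

namespace Matrix

variable {ι : Type*} [Fintype ι]

lemma neg_sum_abs_mul_dotProduct_self_le (M : Matrix ι ι ℝ) (x : ι → ℝ) :
    -((∑ k, ∑ l, |M k l|) * (x ⬝ᵥ x)) ≤ x ⬝ᵥ M *ᵥ x := by
  have hsq : ∀ k, x k * x k ≤ x ⬝ᵥ x := fun k =>
    Finset.single_le_sum (f := fun m => x m * x m) (fun m _ => mul_self_nonneg (x m))
      (Finset.mem_univ k)
  have hprod : ∀ k l, |x k * x l| ≤ x ⬝ᵥ x := fun k l => by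
    rw [abs_mul]
    nlinarith [hsq k, hsq l, two_mul_le_add_sq |x k| |x l|, sq_abs (x k), sq_abs (x l)]
  have hexpand : x ⬝ᵥ M *ᵥ x = ∑ k, ∑ l, M k l * (x k * x l) := by
    simp only [dotProduct, mulVec, Finset.mul_sum]
    exact Finset.sum_congr rfl fun k _ => Finset.sum_congr rfl fun l _ => by ring
  rw [hexpand, Finset.sum_mul, ← Finset.sum_neg_distrib]
  gcongr with k
  rw [Finset.sum_mul, ← Finset.sum_neg_distrib]
  gcongr with l
  calc -(|M k l| * (x ⬝ᵥ x)) ≤ -|M k l * (x k * x l)| := by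
        rw [abs_mul, neg_le_neg_iff]
        exact mul_le_mul_of_nonneg_left (hprod k l) (abs_nonneg _)
    _ ≤ M k l * (x k * x l) := neg_abs_le _

lemma IsSymm.exists_pos_posSemidef_one_add_smul [DecidableEq ι] {Φ : Matrix ι ι ℝ}
    (hΦ : Φ.IsSymm) : ∃ ε : ℝ, 0 < ε ∧ (1 + ε • Φ).PosSemidef := by
  set c := ∑ k, ∑ l, |Φ k l|
  set ε := 1 / (1 + c)
  have hε : 0 < ε := by positivity
  have hεc : ε * c ≤ 1 := by
    rw [div_mul_eq_mul_div, one_mul, div_le_one (by positivity)]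
    linarith
  refine ⟨ε, hε, .of_dotProduct_mulVec_nonneg ?_ fun x => ?_⟩
  · rw [IsHermitian, conjTranspose_eq_transpose_of_trivial, transpose_add, transpose_one,
      transpose_smul, hΦ.eq]
  · have hx : 0 ≤ x ⬝ᵥ x := by simpa using dotProduct_self_star_nonneg x
    rw [star_trivial, add_mulVec, one_mulVec, dotProduct_add, smul_mulVec, dotProduct_smul,
      smul_eq_mul]
    nlinarith [mul_le_mul_of_nonneg_left (neg_sum_abs_mul_dotProduct_self_le Φ x) hε.le,
      mul_le_mul_of_nonneg_right hεc hx]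

open scoped MatrixOrder in
lemma PosSemidef.exists_transpose_mul_self_eq [DecidableEq ι] {M : Matrix ι ι ℝ}
    (hM : M.PosSemidef) : ∃ A : Matrix ι ι ℝ, Aᵀ * A = M := by
  refine ⟨CFC.sqrt M, ?_⟩
  rw [← conjTranspose_eq_transpose_of_trivial, (CFC.sqrt_nonneg M).posSemidef.1,
    CFC.sqrt_mul_sqrt_self M hM.nonneg]

end Matrix

lemma sum_mul_apply_sub_eq_zero_of_equilibrium {ι R M : Type*} [Fintype ι] [CommRing R]
    [AddCommGroup M] [Module R M] (f : M →ₗ[R] M →ₗ[R] R) (p : ι → M) {ω : ι → ι → R}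
    (hsymm : ∀ i j, ω i j = ω j i) (heq : ∀ i, ∑ j, ω i j • (p i - p j) = 0) :
    ∑ i, ∑ j, ω i j * f (p i - p j) (p i - p j) = 0 := by
  have hcol : ∀ j, ∑ i, ω i j • (p i - p j) = 0 := fun j => by
    rw [← neg_eq_zero, ← Finset.sum_neg_distrib, ← heq j]
    exact Finset.sum_congr rfl fun i _ => by rw [hsymm, ← smul_neg, neg_sub]
  calc ∑ i, ∑ j, ω i j * f (p i - p j) (p i - p j)
      = ∑ i, f (p i) (∑ j, ω i j • (p i - p j)) - ∑ j, f (p j) (∑ i, ω i j • (p i - p j)) := by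
        simp only [map_sum, map_smul, smul_eq_mul, map_sub, LinearMap.sub_apply, mul_sub,
          Finset.sum_sub_distrib]
        rw [Finset.sum_comm (γ := ι) (f := fun i j => ω i j * (f (p j)) (p i))]
        rw [Finset.sum_comm (γ := ι) (f := fun i j => ω i j * (f (p j)) (p j))]
        ring
    _ = 0 := by simp only [heq, hcol, map_zero, Finset.sum_const_zero, sub_zero]

section Tensegrity

variable {n r : ℕ}

/-- The paper's `trace (F^{ij} P Φ Pᵀ)`, see `trace_Fmat_mul`. -/
def edgeForm (p : Fin n → Fin r → ℝ) (Φ : Matrix (Fin r) (Fin r) ℝ) (i j : Fin n) : ℝ :=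
  (p i - p j) ⬝ᵥ Φ *ᵥ (p i - p j)

def SignCompatible (B C S : Set (Fin n × Fin n)) (p : Fin n → Fin r → ℝ)
    (Φ : Matrix (Fin r) (Fin r) ℝ) : Prop :=
  (∀ e ∈ B, edgeForm p Φ e.1 e.2 = 0) ∧ (∀ e ∈ C, edgeForm p Φ e.1 e.2 ≤ 0) ∧
    (∀ e ∈ S, 0 ≤ edgeForm p Φ e.1 e.2)

lemma edgeForm_smul (p : Fin n → Fin r → ℝ) (c : ℝ) (Φ : Matrix (Fin r) (Fin r) ℝ)
    (i j : Fin n) : edgeForm p (c • Φ) i j = c * edgeForm p Φ i j := by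
  rw [edgeForm, edgeForm, smul_mulVec, dotProduct_smul, smul_eq_mul]

lemma SignCompatible.smul {B C S : Set (Fin n × Fin n)} {p : Fin n → Fin r → ℝ}
    {Φ : Matrix (Fin r) (Fin r) ℝ} (h : SignCompatible B C S p Φ) {c : ℝ} (hc : 0 ≤ c) :
    SignCompatible B C S p (c • Φ) := by
  obtain ⟨hB, hC, hS⟩ := h
  simp only [SignCompatible, edgeForm_smul]
  exact ⟨fun e he => by rw [hB e he, mul_zero],
    fun e he => mul_nonpos_of_nonneg_of_nonpos hc (hC e he), fun e he => mul_nonneg hc (hS e he)⟩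

lemma trace_Fmat_mul (p : Fin n → Fin r → ℝ) (Φ : Matrix (Fin r) (Fin r) ℝ) (i j : Fin n) :
    (Fmat i j * (of p * Φ * (of p)ᵀ)).trace = edgeForm p Φ i j := by
  have hp : (Pi.single i 1 - Pi.single j 1) ᵥ* of p = p i - p j := by
    ext k
    simp [vecMul, dotProduct, Pi.single_apply, sub_mul, Finset.sum_sub_distrib]
  rw [Fmat, vecMulVec_mul, trace_vecMulVec, ← vecMul_vecMul, vecMul_transpose, dotProduct_mulVec,
    ← vecMul_vecMul, hp, dotProduct_comm, ← dotProduct_mulVec, edgeForm]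

lemma sqDist_eq_dotProduct (x y : Fin r → ℝ) : sqDist x y = (x - y) ⬝ᵥ (x - y) := by
  simp only [sqDist, dotProduct, sq, Pi.sub_apply]

lemma sqDist_mulVec_add {s : ℕ} (A : Matrix (Fin s) (Fin r) ℝ) (b : Fin s → ℝ)
    (x y : Fin r → ℝ) :
    sqDist (A *ᵥ x + b) (A *ᵥ y + b) = sqDist x y + (x - y) ⬝ᵥ (Aᵀ * A - 1) *ᵥ (x - y) := by
  rw [sqDist_eq_dotProduct, sqDist_eq_dotProduct, add_sub_add_right_eq_sub, ← mulVec_sub]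
  generalize x - y = d
  rw [sub_mulVec, one_mulVec, dotProduct_sub, ← mulVec_mulVec, mulVec_transpose,
    dotProduct_comm d ((A *ᵥ d) ᵥ* A), ← dotProduct_mulVec]
  ring

lemma dominates_mulVec_add_iff {B C S : Set (Fin n × Fin n)} (p : Fin n → Fin r → ℝ)
    (A : Matrix (Fin r) (Fin r) ℝ) (b : Fin r → ℝ) :
    Dominates B C S p (fun i => A *ᵥ p i + b) ↔ SignCompatible B C S p (Aᵀ * A - 1) := by
  simp only [Dominates, SignCompatible, sqDist_mulVec_add, edgeForm, add_eq_left,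
    add_le_iff_nonpos_right, le_add_iff_nonneg_right]

lemma tensegrityCongruent_mulVec_add_iff (p : Fin n → Fin r → ℝ) (A : Matrix (Fin r) (Fin r) ℝ)
    (b : Fin r → ℝ) :
    TensegrityCongruent p (fun i => A *ᵥ p i + b) ↔ ∀ i j, edgeForm p (Aᵀ * A - 1) i j = 0 := by
  simp only [TensegrityCongruent, sqDist_mulVec_add, edgeForm, add_eq_left]

lemma eq_zero_of_forall_edgeForm_eq_zero {p : Fin n → Fin r → ℝ}
    (hdim : affineSpan ℝ (Set.range p) = ⊤) {Φ : Matrix (Fin r) (Fin r) ℝ} (hΦ : Φ.IsSymm)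
    (h : ∀ i j, edgeForm p Φ i j = 0) : Φ = 0 := by
  obtain ⟨_, i₀, -⟩ := AffineSubspace.nonempty_of_affineSpan_eq_top ℝ _ _ hdim
  have hspan : Submodule.span ℝ (Set.range fun i => p i - p i₀) = ⊤ := by
    simpa only [vsub_eq_sub, vectorSpan_range_eq_span_range_vsub_right ℝ p i₀] using
      AffineSubspace.vectorSpan_eq_top_of_affineSpan_eq_top ℝ _ _ hdim
  -- polarization, using `(p i - p i₀) - (p j - p i₀) = p i - p j`
  have hpolar : ∀ i j, toBilin' Φ (p i - p i₀) (p j - p i₀) = 0 := by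
    intro i j
    have hij := h i j
    rw [edgeForm, ← sub_sub_sub_cancel_right (p i) (p j) (p i₀)] at hij
    have hi := h i i₀
    have hj := h j i₀
    simp only [edgeForm, toBilin'_apply'] at hi hj ⊢
    generalize p i - p i₀ = u, p j - p i₀ = v at hij hi hj ⊢
    have hsymm : v ⬝ᵥ Φ *ᵥ u = u ⬝ᵥ Φ *ᵥ v := by
      rw [dotProduct_mulVec, dotProduct_comm, ← mulVec_transpose, hΦ.eq]
    rw [sub_dotProduct, mulVec_sub, dotProduct_sub, dotProduct_sub, hsymm, hi, hj] at hij
    linarith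
  apply toBilin'.map_eq_zero_iff.1
  exact LinearMap.ext_on_range hspan fun i => LinearMap.ext_on_range hspan fun j => hpolar i j

section Stress

variable {B C S : Set (Fin n × Fin n)} {p : Fin n → Fin r → ℝ} {ω : Fin n → Fin n → ℝ}

lemma IsStress.sum_mul_edgeForm_eq_zero {E : Set (Fin n × Fin n)} (hω : IsStress E p ω)
    (Φ : Matrix (Fin r) (Fin r) ℝ) : ∑ i, ∑ j, ω i j * edgeForm p Φ i j = 0 := by
  simpa only [toBilin'_apply', edgeForm] using
    sum_mul_apply_sub_eq_zero_of_equilibrium (toBilin' Φ) p hω.1 hω.2.2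

lemma SignCompatible.stress_mul_edgeForm_eq_zero {Φ : Matrix (Fin r) (Fin r) ℝ}
    (h : SignCompatible B C S p Φ) (hω : IsStress (B ∪ C ∪ S) p ω)
    (hproper : IsProperStress C S ω) (i j : Fin n) : ω i j * edgeForm p Φ i j = 0 := by
  obtain ⟨hB, hC, hS⟩ := h
  have hnonpos : ∀ e : Fin n × Fin n, ω e.1 e.2 * edgeForm p Φ e.1 e.2 ≤ 0 := by
    intro e
    by_cases heB : e ∈ B
    · rw [hB e heB, mul_zero]
    by_cases heC : e ∈ C
    · exact mul_nonpos_of_nonneg_of_nonpos (hproper.1 e heC) (hC e heC)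
    by_cases heS : e ∈ S
    · exact mul_nonpos_of_nonpos_of_nonneg (hproper.2 e heS) (hS e heS)
    rw [hω.2.1 e.1 e.2 (by simp [heB, heC, heS]), zero_mul]
  have hsum := hω.sum_mul_edgeForm_eq_zero Φ
  rw [← Fintype.sum_prod_type'] at hsum
  exact (Finset.sum_eq_zero_iff_of_nonpos fun e _ => hnonpos e).1 hsum (i, j) (Finset.mem_univ _)

lemma signCompatible_iff (hω : IsStress (B ∪ C ∪ S) p ω) (hproper : IsProperStress C S ω)
    (Φ : Matrix (Fin r) (Fin r) ℝ) :
    SignCompatible B C S p Φ ↔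
      (∀ e : Fin n × Fin n, (e ∈ B ∨ (e ∈ C ∧ ω e.1 e.2 ≠ 0) ∨ (e ∈ S ∧ ω e.1 e.2 ≠ 0)) →
          edgeForm p Φ e.1 e.2 = 0) ∧
        (∀ e ∈ C, ω e.1 e.2 = 0 → edgeForm p Φ e.1 e.2 ≤ 0) ∧
        (∀ e ∈ S, ω e.1 e.2 = 0 → 0 ≤ edgeForm p Φ e.1 e.2) := by
  refine ⟨fun h => ⟨?_, fun e he _ => h.2.1 e he, fun e he _ => h.2.2 e he⟩, ?_⟩
  · rintro e (he | ⟨-, hωe⟩ | ⟨-, hωe⟩)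
    · exact h.1 e he
    all_goals
      exact (mul_eq_zero.1 (h.stress_mul_edgeForm_eq_zero hω hproper e.1 e.2)).resolve_left hωe
  · rintro ⟨hzero, hC, hS⟩
    refine ⟨fun e he => hzero e (.inl he), fun e he => ?_, fun e he => ?_⟩
    · by_cases hωe : ω e.1 e.2 = 0
      · exact hC e he hωe
      · exact (hzero e (.inr (.inl ⟨he, hωe⟩))).le
    · by_cases hωe : ω e.1 e.2 = 0
      · exact hS e he hωe
      · exact (hzero e (.inr (.inr ⟨he, hωe⟩))).ge

end Stress

lemma exists_affinelyDominated_not_congruent_iff {B C S : Set (Fin n × Fin n)}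
    {p : Fin n → Fin r → ℝ} (hdim : affineSpan ℝ (Set.range p) = ⊤) :
    (∃ p', AffinelyDominated B C S p p' ∧ ¬ TensegrityCongruent p p') ↔
      ∃ Φ : Matrix (Fin r) (Fin r) ℝ, Φ ≠ 0 ∧ Φ.IsSymm ∧ SignCompatible B C S p Φ := by
  constructor
  · rintro ⟨p', ⟨hdom, A, b, hp'⟩, hnc⟩
    obtain rfl : p' = fun i => A *ᵥ p i + b := funext hp'
    refine ⟨Aᵀ * A - 1, fun hΦ => hnc ?_, ?_, (dominates_mulVec_add_iff p A b).1 hdom⟩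
    · simp [tensegrityCongruent_mulVec_add_iff, hΦ, edgeForm]
    · simp [IsSymm, transpose_sub, transpose_mul]
  · rintro ⟨Φ, hΦ0, hΦ, hsign⟩
    obtain ⟨ε, hε, hpsd⟩ := hΦ.exists_pos_posSemidef_one_add_smul
    obtain ⟨A, hA⟩ := hpsd.exists_transpose_mul_self_eq
    have hAΦ : Aᵀ * A - 1 = ε • Φ := by rw [hA, add_sub_cancel_left]
    refine ⟨fun i => A *ᵥ p i + 0, ⟨?_, A, 0, fun _ => rfl⟩, fun hcong => ?_⟩
    · rw [dominates_mulVec_add_iff, hAΦ]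
      exact hsign.smul hε.le
    · rw [tensegrityCongruent_mulVec_add_iff, hAΦ] at hcong
      exact smul_ne_zero hε.ne' hΦ0 (eq_zero_of_forall_edgeForm_eq_zero hdim (hΦ.smul ε) hcong)

end Tensegrity

theorem statement15_general {n r : ℕ}
    (B C S : Set (Fin n × Fin n))
    (p : Fin n → Fin r → ℝ)
    (hdim : affineSpan ℝ (Set.range p) = ⊤)
    (ω : Fin n → Fin n → ℝ)
    (hstress : IsStress (B ∪ C ∪ S) p ω)
    (hproper : IsProperStress C S ω) :
    (∃ p' : Fin n → Fin r → ℝ,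
        AffinelyDominated B C S p p' ∧ ¬ TensegrityCongruent p p') ↔
      ∃ Φ : Matrix (Fin r) (Fin r) ℝ, Φ ≠ 0 ∧ Φ.IsSymm ∧
        (∀ e : Fin n × Fin n,
          (e ∈ B ∨ (e ∈ C ∧ ω e.1 e.2 ≠ 0) ∨ (e ∈ S ∧ ω e.1 e.2 ≠ 0)) →
          (Fmat e.1 e.2 * (Matrix.of p * Φ * (Matrix.of p)ᵀ)).trace = 0) ∧
        (∀ e ∈ C, ω e.1 e.2 = 0 →
          (Fmat e.1 e.2 * (Matrix.of p * Φ * (Matrix.of p)ᵀ)).trace ≤ 0) ∧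
        (∀ e ∈ S, ω e.1 e.2 = 0 →
          0 ≤ (Fmat e.1 e.2 * (Matrix.of p * Φ * (Matrix.of p)ᵀ)).trace) := by
  simp only [trace_Fmat_mul]
  rw [exists_affinelyDominated_not_congruent_iff hdim]
  exact exists_congr fun Φ => and_congr_right' <| and_congr_right' <|
    signCompatible_iff hstress hproper Φ

/-- given a proper stress `ω`, there is a framework affinely-dominated
by but not congruent to `(G,p)` iff there is a non-zero symmetric `Φ` with
`trace (F^{ij} P Φ Pᵀ)` zero on `B ∪ C* ∪ S*`, `≤ 0` on `C⁰` and `≥ 0` on `S⁰`. -/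
theorem statement15 {n r : ℕ}
    (B C S : Set (Fin n × Fin n)) (hG : TensegrityGraph B C S)
    (p : Fin n → Fin r → ℝ)
    (hdim : affineSpan ℝ (Set.range p) = ⊤)
    (hcentroid : ∀ k, ∑ i, p i k = 0)
    (ω : Fin n → Fin n → ℝ)
    (hstress : IsStress (B ∪ C ∪ S) p ω)
    (hproper : IsProperStress C S ω) :
    (∃ p' : Fin n → Fin r → ℝ,
        AffinelyDominated B C S p p' ∧ ¬ TensegrityCongruent p p') ↔
      ∃ Φ : Matrix (Fin r) (Fin r) ℝ, Φ ≠ 0 ∧ Φ.IsSymm ∧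
        (∀ e : Fin n × Fin n,
          (e ∈ B ∨ (e ∈ C ∧ ω e.1 e.2 ≠ 0) ∨ (e ∈ S ∧ ω e.1 e.2 ≠ 0)) →
          (Fmat e.1 e.2 * (Matrix.of p * Φ * (Matrix.of p)ᵀ)).trace = 0) ∧
        (∀ e ∈ C, ω e.1 e.2 = 0 →
          (Fmat e.1 e.2 * (Matrix.of p * Φ * (Matrix.of p)ᵀ)).trace ≤ 0) ∧
        (∀ e ∈ S, ω e.1 e.2 = 0 →
          0 ≤ (Fmat e.1 e.2 * (Matrix.of p * Φ * (Matrix.of p)ᵀ)).trace) :=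
  statement15_general B C S p hdim ω hstress hproper
end
end
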